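/- Let A be a positive operator on a complex Hilbert space H and T ∈ B_A(H). For every real θ, w_A(Re_A(e^{iθ}T)) = ‖Re_A(e^{iθ}T)‖_A, where Re_A(S) = (S + S^{♯A})/2. -/

import Mathlib

noncomputable section
open Complex ContinuousLinearMap

variable {H : Type*} [NormedAddCommGroup H] [InnerProductSpace ℂ H] [CompleteSpace H]

/-- The `A`-inner product `⟨x,y⟩_A = ⟨Ax,y⟩`. -/
def innA (A : H →L[ℂ] H) (x y : H) : ℂ := inner ℂ (A x) y

/-- The `A`-seminorm of a vector, `‖x‖_A = √⟨x,x⟩_A`. -/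
def vnormA (A : H →L[ℂ] H) (x : H) : ℝ := Real.sqrt (innA A x x).re

/-- The `A`-numerical radius `w_A(T) = sup{|⟨Tx,x⟩_A| : ‖x‖_A = 1}`. -/
def wA (A T : H →L[ℂ] H) : ℝ :=
  sSup {r : ℝ | ∃ x : H, vnormA A x = 1 ∧ r = ‖innA A (T x) x‖}

/-- The `A`-operator seminorm, `sup` over `A`-unit vectors in the closure of the range of `A`. -/
def opNormA (A T : H →L[ℂ] H) : ℝ :=
  sSup {r : ℝ | ∃ x : H, x ∈ closure (Set.range A) ∧ vnormA A x = 1 ∧ r = vnormA A (T x)}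

/-- The `A`-operator seminorm, `sup` over all `A`-unit vectors (used when `A > 0`). -/
def opNormA' (A T : H →L[ℂ] H) : ℝ :=
  sSup {r : ℝ | ∃ x : H, vnormA A x = 1 ∧ r = vnormA A (T x)}

/-- The `A`-Crawford number `c_A(T) = inf{|⟨Tx,x⟩_A| : ‖x‖_A = 1}`. -/
def cA (A T : H →L[ℂ] H) : ℝ :=
  sInf {r : ℝ | ∃ x : H, vnormA A x = 1 ∧ r = ‖innA A (T x) x‖}

/-- The `A`-minimum modulus `m_A(T) = inf{‖Tx‖_A : ‖x‖_A = 1}` (version for `A > 0`). -/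
def mA (A T : H →L[ℂ] H) : ℝ :=
  sInf {r : ℝ | ∃ x : H, vnormA A x = 1 ∧ r = vnormA A (T x)}

/-- `S` is an `A`-adjoint of `T`, i.e. `A S = T* A`. -/
def IsAAdjoint (A T S : H →L[ℂ] H) : Prop :=
  A.comp S = (ContinuousLinearMap.adjoint T).comp A

/-- `A` is strictly positive: positive and `⟨Ax,x⟩ > 0` for all `x ≠ 0`. -/
def StrictPos (A : H →L[ℂ] H) : Prop :=
  A.IsPositive ∧ ∀ x : H, x ≠ 0 → 0 < (innA A x x).re

/-- The inner product on `H ⊕ H`. -/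
def inn2 (u v : H × H) : ℂ := inner ℂ u.1 v.1 + inner ℂ u.2 v.2

/-- `B = diag(A, A)` acting on `H ⊕ H`. -/
def Bop (A : H →L[ℂ] H) : H × H →L[ℂ] H × H := A.prodMap A

/-- The `B`-seminorm on `H ⊕ H`. -/
def vnormB (A : H →L[ℂ] H) (u : H × H) : ℝ := Real.sqrt (inn2 (Bop A u) u).re

/-- The `B`-numerical radius on `H ⊕ H`, where `B = diag(A, A)`. -/
def wB (A : H →L[ℂ] H) (S : H × H →L[ℂ] H × H) : ℝ :=
  sSup {r : ℝ | ∃ u : H × H, vnormB A u = 1 ∧ r = ‖inn2 (Bop A (S u)) u‖}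

/-- The `2 × 2` operator matrix `[[X, Y], [Z, W]]` acting on `H ⊕ H`. -/
def blk (X Y Z W : H →L[ℂ] H) : H × H →L[ℂ] H × H :=
  ((X.comp (ContinuousLinearMap.fst ℂ H H)) + (Y.comp (ContinuousLinearMap.snd ℂ H H))).prod
    ((Z.comp (ContinuousLinearMap.fst ℂ H H)) + (W.comp (ContinuousLinearMap.snd ℂ H H)))

/-! The operator `R = Re_A(e^{iθ}T)` is `A`-selfadjoint (`AR = R*A`), so `(x, y) ↦ ⟨Rx, y⟩_A` is a
Hermitian form. Cauchy–Schwarz gives `w_A(R) ≤ ‖R‖_A` once `x` is replaced by its component in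
`(ker A)ᗮ = closure (range A)`, which changes neither `‖x‖_A` nor `‖Rx‖_A`. Polarizing the
Hermitian form and using the parallelogram law for `‖·‖_A` gives `‖Rx‖_A ≤ w_A(R)`. The two bounds
also show that one supremum is finite iff the other is, so the junk value `sSup = 0` of unbounded
sets is the same on both sides. -/

open scoped InnerProductSpace

lemma Real.sSup_eq_of_forall_le_sSup {s t : Set ℝ} (hs : ∀ r ∈ s, 0 ≤ r) (ht : ∀ r ∈ t, 0 ≤ r)
    (hst : BddAbove t → ∀ r ∈ s, r ≤ sSup t) (hts : BddAbove s → ∀ r ∈ t, r ≤ sSup s) :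
    sSup s = sSup t := by
  by_cases hs' : BddAbove s
  · have ht' : BddAbove t := ⟨sSup s, hts hs'⟩
    exact le_antisymm (Real.sSup_le (hst ht') (Real.sSup_nonneg ht))
      (Real.sSup_le (hts hs') (Real.sSup_nonneg hs))
  · have ht' : ¬BddAbove t := fun ht' => hs' ⟨sSup t, hst ht'⟩
    rw [Real.sSup_of_not_bddAbove hs', Real.sSup_of_not_bddAbove ht']

section

variable {E : Type*} [NormedAddCommGroup E] [InnerProductSpace ℂ E] {A : E →L[ℂ] E}

lemma vnormA_nonneg (x : E) : 0 ≤ vnormA A x := Real.sqrt_nonneg _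

lemma norm_ofReal_inv_vnormA (x : E) : ‖(((vnormA A x)⁻¹ : ℝ) : ℂ)‖ = (vnormA A x)⁻¹ := by
  rw [Complex.norm_real, Real.norm_eq_abs, abs_inv, abs_of_nonneg (vnormA_nonneg x)]

lemma norm_innA_smul_smul (c : ℂ) (x y : E) :
    ‖innA A (c • x) (c • y)‖ = ‖c‖ ^ 2 * ‖innA A x y‖ := by
  simp only [innA, map_smul, inner_smul_left, inner_smul_right, norm_mul, RCLike.norm_conj]
  ring

variable [CompleteSpace E]

lemma innA_conj_symm (hA : IsSelfAdjoint A) (x y : E) :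
    starRingEnd ℂ (innA A x y) = innA A y x := by
  rw [innA, innA, inner_conj_symm]
  exact (hA.isSymmetric y x).symm

lemma vnormA_sub_of_apply_eq_zero (hA : IsSelfAdjoint A) (x : E) {v : E} (hv : A v = 0) :
    vnormA A (x - v) = vnormA A x := by
  have hxv : ⟪A x, v⟫_ℂ = 0 := (hA.isSymmetric x v).trans (by simp [hv])
  simp [vnormA, innA, hv, hxv]

lemma innA_eq_inner_sqrt (hA : A.IsPositive) (x y : E) :
    innA A x y = ⟪CFC.sqrt A x, CFC.sqrt A y⟫_ℂ := by
  have hsqrt : IsSelfAdjoint (CFC.sqrt A) := IsSelfAdjoint.of_nonneg (CFC.sqrt_nonneg A)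
  have hAx : A x = CFC.sqrt A (CFC.sqrt A x) := by
    rw [← mul_apply_eq_comp, CFC.sqrt_mul_sqrt_self A (A.nonneg_iff_isPositive.mpr hA)]
  rw [innA, hAx]
  exact hsqrt.isSymmetric _ _

lemma vnormA_eq_norm_sqrt (hA : A.IsPositive) (x : E) : vnormA A x = ‖CFC.sqrt A x‖ := by
  rw [vnormA, innA_eq_inner_sqrt hA, inner_self_eq_norm_sq_to_K]
  norm_cast
  exact Real.sqrt_sq (norm_nonneg _)

lemma re_innA_self (hA : A.IsPositive) (x : E) : (innA A x x).re = vnormA A x ^ 2 := by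
  rw [innA_eq_inner_sqrt hA, inner_self_eq_norm_sq_to_K, vnormA_eq_norm_sqrt hA]
  norm_cast

lemma norm_innA_le (hA : A.IsPositive) (x y : E) :
    ‖innA A x y‖ ≤ vnormA A x * vnormA A y := by
  rw [innA_eq_inner_sqrt hA, vnormA_eq_norm_sqrt hA, vnormA_eq_norm_sqrt hA]
  exact norm_inner_le_norm _ _

lemma vnormA_smul (hA : A.IsPositive) (c : ℂ) (x : E) : vnormA A (c • x) = ‖c‖ * vnormA A x := by
  rw [vnormA_eq_norm_sqrt hA, vnormA_eq_norm_sqrt hA, map_smul, norm_smul]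

lemma vnormA_inv_smul_self (hA : A.IsPositive) {x : E} (hx : vnormA A x ≠ 0) :
    vnormA A ((((vnormA A x)⁻¹ : ℝ) : ℂ) • x) = 1 := by
  rw [vnormA_smul hA, norm_ofReal_inv_vnormA, inv_mul_cancel₀ hx]

lemma vnormA_parallelogram (hA : A.IsPositive) (x y : E) :
    vnormA A (x + y) ^ 2 + vnormA A (x - y) ^ 2 = 2 * (vnormA A x ^ 2 + vnormA A y ^ 2) := by
  simp only [vnormA_eq_norm_sqrt hA, map_add, map_sub]
  exact parallelogram_law_with_norm ℂ _ _

lemma exists_apply_eq_zero_sub_mem_closure_range (hA : IsSelfAdjoint A) (x : E) :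
    ∃ v, A v = 0 ∧ x - v ∈ closure (Set.range A) := by
  set K := LinearMap.ker (A : E →ₗ[ℂ] E)
  have : CompleteSpace K := A.isClosed_ker.completeSpace_coe
  refine ⟨K.starProjection x, K.starProjection_apply_mem x, ?_⟩
  have hx := K.sub_starProjection_mem_orthogonal x
  rw [orthogonal_ker, hA.adjoint_eq, ← SetLike.mem_coe, Submodule.topologicalClosure_coe,
    LinearMap.coe_range, coe_coe] at hx
  exact hx

variable {T S T' S' : E →L[ℂ] E}

lemma IsAAdjoint.innA_apply (h : IsAAdjoint A T S) (x y : E) :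
    innA A (S x) y = innA A x (T y) := by
  rw [innA, innA, ← comp_apply, h, comp_apply, adjoint_inner_left]

lemma IsAAdjoint.apply_eq_zero (h : IsAAdjoint A T S) {x : E} (hx : A x = 0) : A (S x) = 0 := by
  rw [← comp_apply, h, comp_apply, hx, map_zero]

lemma IsAAdjoint.symm (hA : IsSelfAdjoint A) (h : IsAAdjoint A T S) : IsAAdjoint A S T := by
  have h' := congrArg adjoint h
  simp only [adjoint_comp, adjoint_adjoint, hA.adjoint_eq] at h'
  exact h'.symm

lemma IsAAdjoint.add (h : IsAAdjoint A T S) (h' : IsAAdjoint A T' S') :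
    IsAAdjoint A (T + T') (S + S') := by
  rw [IsAAdjoint, comp_add, h, h', map_add, add_comp]

lemma IsAAdjoint.smul (h : IsAAdjoint A T S) (c : ℂ) : IsAAdjoint A (c • T) (star c • S) := by
  rw [IsAAdjoint, comp_smul, h, ← smul_comp, ← star_eq_adjoint, ← star_eq_adjoint, star_smul]

lemma IsAAdjoint.isAAdjoint_self_half_smul_add (hA : IsSelfAdjoint A) (h : IsAAdjoint A T S)
    (c : ℂ) :
    IsAAdjoint A ((2 : ℂ)⁻¹ • (c • T + star c • S)) ((2 : ℂ)⁻¹ • (c • T + star c • S)) := by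
  have hR := ((h.smul c).add ((h.symm hA).smul (star c))).smul (2 : ℂ)⁻¹
  rwa [star_star, add_comm (star c • S), star_inv₀, star_ofNat] at hR

def wASet (A T : E →L[ℂ] E) : Set ℝ := {r | ∃ x : E, vnormA A x = 1 ∧ r = ‖innA A (T x) x‖}

def opNormASet (A T : E →L[ℂ] E) : Set ℝ :=
  {r | ∃ x : E, x ∈ closure (Set.range A) ∧ vnormA A x = 1 ∧ r = vnormA A (T x)}

lemma norm_innA_le_sSup_wASet_mul (hA : A.IsPositive) (hW : BddAbove (wASet A T)) (z : E) :
    ‖innA A (T z) z‖ ≤ sSup (wASet A T) * vnormA A z ^ 2 := by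
  by_cases hz : vnormA A z = 0
  · simpa [hz] using norm_innA_le hA (T z) z
  have hle := le_csSup hW ⟨_, vnormA_inv_smul_self hA hz, rfl⟩
  rwa [map_smul, norm_innA_smul_smul, norm_ofReal_inv_vnormA, inv_pow,
    inv_mul_le_iff₀ (by positivity), mul_comm] at hle

variable {R : E →L[ℂ] E}

lemma IsAAdjoint.four_mul_re_innA (hA : IsSelfAdjoint A) (hR : IsAAdjoint A R R) (x y : E) :
    4 * (innA A (R x) y).re =
      (innA A (R (x + y)) (x + y)).re - (innA A (R (x - y)) (x - y)).re := by
  have hyx : innA A (R y) x = starRingEnd ℂ (innA A (R x) y) := by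
    rw [innA_conj_symm hA, hR.innA_apply]
  simp only [innA, map_add, map_sub, inner_add_left, inner_add_right, inner_sub_left,
    inner_sub_right] at hyx ⊢
  rw [hyx]
  simp only [Complex.add_re, Complex.sub_re, Complex.conj_re]
  ring

lemma IsAAdjoint.re_innA_le (hA : A.IsPositive) (hR : IsAAdjoint A R R) {c : ℝ}
    (hc : ∀ z, ‖innA A (R z) z‖ ≤ c * vnormA A z ^ 2) {x y : E} (hx : vnormA A x = 1)
    (hy : vnormA A y = 1) : (innA A (R x) y).re ≤ c := by
  have hplus := (Complex.re_le_norm _).trans (hc (x + y))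
  have hminus := (neg_le_of_abs_le (Complex.abs_re_le_norm _)).trans' (neg_le_neg (hc (x - y)))
  have hsum : c * vnormA A (x + y) ^ 2 + c * vnormA A (x - y) ^ 2 = 4 * c := by
    rw [← mul_add, vnormA_parallelogram hA, hx, hy]
    ring
  linarith [hR.four_mul_re_innA hA.isSelfAdjoint x y]

lemma IsAAdjoint.vnormA_apply_le (hA : A.IsPositive) (hR : IsAAdjoint A R R) {c : ℝ}
    (hc : ∀ z, ‖innA A (R z) z‖ ≤ c * vnormA A z ^ 2) {x : E} (hx : vnormA A x = 1) :
    vnormA A (R x) ≤ c := by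
  by_cases h0 : vnormA A (R x) = 0
  · simpa [h0, hx] using (norm_nonneg _).trans (hc x)
  have hre : (innA A (R x) ((((vnormA A (R x))⁻¹ : ℝ) : ℂ) • R x)).re = vnormA A (R x) := by
    rw [innA, inner_smul_right, Complex.re_ofReal_mul, ← innA, re_innA_self hA]
    field_simp
  exact hre ▸ hR.re_innA_le hA hc hx (vnormA_inv_smul_self hA h0)

lemma IsAAdjoint.norm_innA_le_sSup_opNormASet (hA : A.IsPositive) (hR : IsAAdjoint A R R)
    (hN : BddAbove (opNormASet A R)) {x : E} (hx : vnormA A x = 1) :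
    ‖innA A (R x) x‖ ≤ sSup (opNormASet A R) := by
  obtain ⟨v, hv, hmem⟩ := exists_apply_eq_zero_sub_mem_closure_range hA.isSelfAdjoint x
  have hxv : vnormA A (x - v) = 1 := by rw [vnormA_sub_of_apply_eq_zero hA.isSelfAdjoint x hv, hx]
  calc ‖innA A (R x) x‖ ≤ vnormA A (R x) * vnormA A x := norm_innA_le hA _ _
    _ = vnormA A (R (x - v)) := by
      rw [hx, mul_one, map_sub,
        vnormA_sub_of_apply_eq_zero hA.isSelfAdjoint _ (hR.apply_eq_zero hv)]
    _ ≤ sSup (opNormASet A R) := le_csSup hN ⟨x - v, hmem, hxv, rfl⟩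

theorem IsAAdjoint.wA_eq_opNormA (hA : A.IsPositive) (hR : IsAAdjoint A R R) :
    wA A R = opNormA A R :=
  Real.sSup_eq_of_forall_le_sSup (s := wASet A R) (t := opNormASet A R)
    (fun _ ⟨_, _, hr⟩ => hr ▸ norm_nonneg _) (fun _ ⟨_, _, _, hr⟩ => hr ▸ vnormA_nonneg _)
    (fun hN _ ⟨_, hx, hr⟩ => hr ▸ hR.norm_innA_le_sSup_opNormASet hA hN hx)
    (fun hW _ ⟨_, _, hx, hr⟩ => hr ▸ hR.vnormA_apply_le hA (norm_innA_le_sSup_wASet_mul hA hW) hx)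

end

theorem stmt1 (A T S : H →L[ℂ] H) (hA : A.IsPositive) (hS : IsAAdjoint A T S)
    (θ : ℝ) :
    wA A ((2:ℂ)⁻¹ • (Complex.exp ((θ : ℝ) * Complex.I) • T + Complex.exp (-((θ : ℝ) * Complex.I)) • S)) = opNormA A ((2:ℂ)⁻¹ • (Complex.exp ((θ : ℝ) * Complex.I) • T + Complex.exp (-((θ : ℝ) * Complex.I)) • S)) := by
  have hconj :
      Complex.exp (-((θ : ℝ) * Complex.I)) = star (Complex.exp ((θ : ℝ) * Complex.I)) := by
    rw [Complex.star_def, ← Complex.exp_conj, map_mul, Complex.conj_ofReal, Complex.conj_I,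
      mul_neg]
  rw [hconj]
  exact (hS.isAAdjoint_self_half_smul_add hA.isSelfAdjoint _).wA_eq_opNormA hA
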